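/- The equation cosh(t)cos(t) + 1 = 0 has infinitely many positive solutions t. -/
import Mathlib

open Real

lemma secular_root_in_interval (n : ℕ) :
    ∃ t : ℝ, (π/2 + n * (2*π)) ≤ t ∧ t ≤ (π + n * (2*π)) ∧
      Real.cosh t * Real.cos t + 1 = 0 := by
  set a : ℝ := π/2 + n * (2*π) with ha
  set b : ℝ := π + n * (2*π) with hb
  have hpi := Real.pi_pos
  have hab : a ≤ b := by
    simp only [ha, hb]
    nlinarith
  have hcont : ContinuousOn (fun t => Real.cosh t * Real.cos t + 1) (Set.Icc a b) :=
    (Real.continuous_cosh.mul Real.continuous_cos |>.add continuous_const).continuousOn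
  have hfa : Real.cosh a * Real.cos a + 1 = 1 := by
    rw [ha, Real.cos_add_nat_mul_two_pi, Real.cos_pi_div_two]; ring
  have hfb : Real.cosh b * Real.cos b + 1 = 1 - Real.cosh b := by
    rw [hb, Real.cos_add_nat_mul_two_pi, Real.cos_pi]; ring
  have hb0 : 0 < b := by positivity
  have hcoshb : 1 < Real.cosh b := Real.one_lt_cosh.mpr (ne_of_gt hb0)
  have hmem : (0:ℝ) ∈ Set.Icc (Real.cosh b * Real.cos b + 1) (Real.cosh a * Real.cos a + 1) := by
    rw [hfa, hfb]; constructor <;> linarith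
  obtain ⟨t, htmem, hft⟩ := intermediate_value_Icc' hab hcont hmem
  exact ⟨t, htmem.1, htmem.2, hft⟩

/-- The secular equation `cosh t · cos t + 1 = 0` of the clamped cantilevered
Euler–Bernoulli beam has infinitely many positive roots. -/
theorem secular_equation_infinitely_many_roots :
    {t : ℝ | 0 < t ∧ Real.cosh t * Real.cos t + 1 = 0}.Infinite := by
  apply Set.infinite_of_not_bddAbove
  rintro ⟨M, hM⟩
  obtain ⟨n, hn⟩ := exists_nat_gt M
  obtain ⟨t, h1, h2, h3⟩ := secular_root_in_interval n
  have hpi := Real.pi_pos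
  have hpi3 : (3:ℝ) ≤ π := by
    have := Real.pi_gt_three; linarith
  have hnt : (n:ℝ) < t := by
    have : (n:ℝ) * 1 ≤ (n:ℝ) * (2*π) := by
      apply mul_le_mul_of_nonneg_left _ (Nat.cast_nonneg n); nlinarith
    nlinarith
  have ht0 : 0 < t := lt_of_le_of_lt (Nat.cast_nonneg n) hnt
  have : t ≤ M := hM ⟨ht0, h3⟩
  linarith
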